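/- arXiv:1101.4655 — 4 statements merged into one kernel-verified Lean document; each statement's English description precedes it below -/
import Mathlib

section
/- If words w and w' are in the same commutation class, then there exists an isomorphism of labeled posets f : P(w) → P(w'), i.e., a poset isomorphism with w'_{f(i)} = w_i for all i. -/
def CommMove {S : Type*} (comm : S → S → Prop) (w w' : List S) : Prop :=
  ∃ (u v : List S) (a b : S), comm a b ∧ w = u ++ a :: b :: v ∧ w' = u ++ b :: a :: v

def CommClass {S : Type*} (comm : S → S → Prop) : List S → List S → Prop :=
  Relation.ReflTransGen (CommMove comm)

def WStep {S : Type*} (comm : S → S → Prop) (w : List S) (i j : Fin w.length) : Prop :=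
  i ≤ j ∧ (w.get i = w.get j ∨ ¬ comm (w.get i) (w.get j))

/-- The word-poset order `≤_w` on positions of `w`. -/
def WLe {S : Type*} (comm : S → S → Prop) (w : List S) : Fin w.length → Fin w.length → Prop :=
  Relation.TransGen (WStep comm w)

/-!
A commutation move turns `u ++ a :: b :: v` into `u ++ b :: a :: v` with `a`, `b` commuting, hence
distinct. The transposition of the positions `|u|` and `|u| + 1` preserves letters, and it maps
every generating step `i → j` of `P(w)` to a step of `P(w')`: the only pair of positions whose
order it reverses is `(|u|, |u| + 1)`, and that pair is not a step. The same holds for the inverse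
move, so the transposition is an isomorphism of labeled posets; such isomorphisms compose along
the chain of moves.
-/

open Equiv

section WordPoset

variable {S : Type*} {comm : S → S → Prop}

theorem WLe.map {w w' : List S} (f : Fin w.length → Fin w'.length)
    (hlabel : ∀ i, w'.get (f i) = w.get i) (hstep : ∀ i j, WStep comm w i j → f i ≤ f j)
    {i j : Fin w.length} (h : WLe comm w i j) : WLe comm w' (f i) (f j) :=
  h.lift f fun i j hij => ⟨hstep i j hij, by rw [hlabel, hlabel]; exact hij.2⟩

variable (comm) in
def LabeledIso (w w' : List S) : Prop :=
  ∃ e : Fin w.length ≃ Fin w'.length,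
    (∀ i j, WLe comm w i j ↔ WLe comm w' (e i) (e j)) ∧ ∀ i, w'.get (e i) = w.get i

theorem LabeledIso.refl (w : List S) : LabeledIso comm w w :=
  ⟨Equiv.refl _, fun _ _ => Iff.rfl, fun _ => rfl⟩

theorem LabeledIso.trans {w₁ w₂ w₃ : List S} :
    LabeledIso comm w₁ w₂ → LabeledIso comm w₂ w₃ → LabeledIso comm w₁ w₃
  | ⟨e, hle, hlabel⟩, ⟨e', hle', hlabel'⟩ =>
    ⟨e.trans e', fun i j => (hle i j).trans (hle' (e i) (e j)),
      fun i => (hlabel' (e i)).trans (hlabel i)⟩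

theorem LabeledIso.of_equiv {w w' : List S} (e : Fin w.length ≃ Fin w'.length)
    (hlabel : ∀ i, w'.get (e i) = w.get i)
    (hstep : ∀ i j, WStep comm w i j → e i ≤ e j)
    (hstep' : ∀ i j, WStep comm w' i j → e.symm i ≤ e.symm j) :
    LabeledIso comm w w' := by
  have hlabel' : ∀ i, w.get (e.symm i) = w'.get i := fun i => by
    rw [← hlabel, e.apply_symm_apply]
  refine ⟨e, fun i j => ⟨WLe.map e hlabel hstep, fun h => ?_⟩, hlabel⟩
  simpa using WLe.map e.symm hlabel' hstep' h

end WordPoset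

theorem swap_succ_le_swap_succ {p i j : ℕ} (hij : i ≤ j) (hne : ¬(i = p ∧ j = p + 1)) :
    swap p (p + 1) i ≤ swap p (p + 1) j := by
  simp only [swap_apply_def]; split_ifs <;> omega

section AdjacentSwap

variable {S : Type*} (u v : List S)

theorem swap_succ_lt_length {a b c d : S} {k : ℕ} (hk : k < (u ++ a :: b :: v).length) :
    swap u.length (u.length + 1) k < (u ++ c :: d :: v).length := by
  simp only [List.length_append, List.length_cons, swap_apply_def] at hk ⊢
  split_ifs <;> omega

theorem getElem_swap_succ {a b : S} {k : ℕ} (hk : k < (u ++ a :: b :: v).length) :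
    (u ++ b :: a :: v)[swap u.length (u.length + 1) k]'(swap_succ_lt_length u v hk) =
      (u ++ a :: b :: v)[k] := by
  simp only [List.getElem_append, List.getElem_cons, swap_apply_def]
  split_ifs <;> first | rfl | omega

def adjSwap (a b c d : S) : Fin (u ++ a :: b :: v).length ≃ Fin (u ++ c :: d :: v).length where
  toFun k := ⟨swap u.length (u.length + 1) k, swap_succ_lt_length u v k.2⟩
  invFun k := ⟨swap u.length (u.length + 1) k, swap_succ_lt_length u v k.2⟩
  left_inv k := by simp
  right_inv k := by simp

variable {comm : S → S → Prop}

theorem adjSwap_le_of_wStep {a b : S} (c d : S) (hab : comm a b) (hne : a ≠ b)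
    {i j : Fin (u ++ a :: b :: v).length} (h : WStep comm (u ++ a :: b :: v) i j) :
    adjSwap u v a b c d i ≤ adjSwap u v a b c d j := by
  obtain ⟨hij, hletters⟩ := h
  refine swap_succ_le_swap_succ hij ?_
  rintro ⟨hi, hj⟩
  have hia : (u ++ a :: b :: v).get i = a := by simp [hi]
  have hjb : (u ++ a :: b :: v).get j = b := by simp [hj]
  rw [hia, hjb] at hletters
  exact hletters.elim hne (· hab)

theorem LabeledIso.of_commMove (hsym : ∀ a b, comm a b → comm b a) (hirr : ∀ a, ¬ comm a a)
    {w w' : List S} (h : CommMove comm w w') : LabeledIso comm w w' := by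
  obtain ⟨u, v, a, b, hab, rfl, rfl⟩ := h
  have hne : a ≠ b := fun h => hirr a (h ▸ hab)
  exact .of_equiv (adjSwap u v a b b a) (fun k => getElem_swap_succ u v k.2)
    (fun _ _ => adjSwap_le_of_wStep u v b a hab hne)
    (fun _ _ => adjSwap_le_of_wStep u v a b (hsym a b hab) hne.symm)

end AdjacentSwap

theorem commClass_isomorphic_word_posets {S : Type*} (comm : S → S → Prop)
    (hsym : ∀ a b, comm a b → comm b a) (hirr : ∀ a, ¬ comm a a)
    (w w' : List S) (h : CommClass comm w w') :
    ∃ f : Fin w.length → Fin w'.length, Function.Bijective f ∧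
      (∀ i j, WLe comm w i j ↔ WLe comm w' (f i) (f j)) ∧
      (∀ i, w'.get (f i) = w.get i) := by
  obtain ⟨e, hle, hlabel⟩ : LabeledIso comm w w' :=
    h.trans_induction_on LabeledIso.refl (LabeledIso.of_commMove hsym hirr) fun _ _ => .trans
  exact ⟨e, e.bijective, hle, hlabel⟩
end

section
/- For any word w, the map sending a linear extension e of P(w) to the word w(e) defined by w(e)_i = w_{e^{-1}(i)} is a bijection from the set of linear extensions of P(w) onto the commutation class of w. -/
/-- A linear extension of the word poset `P(w)`. -/
def IsLinExt {S : Type*} (comm : S → S → Prop) (w : List S)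
    (e : Fin w.length ≃ Fin w.length) : Prop :=
  ∀ i j, WLe comm w i j → e i ≤ e j

/-- The word `w(e)` associated to a linear extension `e`: `w(e)_i = w_{e⁻¹(i)}`. -/
def wordOf {S : Type*} (w : List S) (e : Fin w.length ≃ Fin w.length) : List S :=
  List.ofFn (fun i => w.get (e.symm i))
/-!
If `e` is not the identity, `e⁻¹` has a descent at consecutive values `k ⋖ k'`. The positions
`e⁻¹ k' < e⁻¹ k` are incomparable in `P(w)`, so their letters commute, and composing `e` with
the transposition `(k k')` gives a linear extension with lexicographically smaller inverse whose
word differs from `w(e)` by one commutation move; well-founded induction puts `w(e)` in the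
class of `w`. Conversely, a commutation move of `w(e)` at values `k ⋖ k'` lifts to
`e ↦ (k k') ∘ e`: a relation of `P(w)` between the positions with values `k` and `k'` would have
to be a single generating step, which a pair of distinct commuting letters is not. Injectivity
holds because positions carrying the same letter are comparable, so two linear extensions with
the same word agree value by value.
-/

open Function Equiv

theorem swap_apply_le_swap_apply_of_covBy {α : Type*} [LinearOrder α] [DecidableEq α]
    {k k' x y : α} (hk : k ⋖ k') (hxy : x ≤ y) (hne : ¬(x = k ∧ y = k')) :
    swap k k' x ≤ swap k k' y := by
  rcases hxy.eq_or_lt with rfl | hlt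
  · rfl
  rw [swap_apply_def, swap_apply_def]
  split_ifs <;> grind [hk.ge_of_gt, hk.le_of_lt, hk.lt]

theorem Fin.val_eq_val_add_one_of_covBy {n : ℕ} {k k' : Fin n} (hk : k ⋖ k') :
    (k' : ℕ) = k + 1 :=
  (Nat.covBy_iff_add_one_eq.mp (Fin.covBy_iff.mp hk)).symm

namespace List

variable {α : Type*} {n : ℕ} {g : Fin n → α} {k k' : Fin n}

theorem apply_eq_getElem_of_ofFn_eq {l : List α} (h : ofFn g = l) (i : Fin n) :
    g i = l[(i : ℕ)]'(by simp [← h]) := by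
  subst h
  simp

theorem ofFn_comp_swap_of_covBy (hk : k ⋖ k') {u v : List α} {a b : α} (hu : u.length = k)
    (h : ofFn g = u ++ a :: b :: v) : ofFn (g ∘ Equiv.swap k k') = u ++ b :: a :: v := by
  have hk' := Fin.val_eq_val_add_one_of_covBy hk
  have hn : n = u.length + v.length + 2 := by simpa [← add_assoc] using congrArg length h
  have hg := apply_eq_getElem_of_ofFn_eq h
  refine ext_getElem (by simp; omega) fun i h1 h2 => ?_
  rw [List.getElem_ofFn, comp_apply, hg]
  simp only [swap_apply_def, getElem_append, getElem_cons]
  split_ifs <;> simp_all [Fin.ext_iff] <;> omega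

theorem exists_ofFn_eq_append_cons_cons (hk : k ⋖ k') :
    ∃ u v, u.length = (k : ℕ) ∧ ofFn g = u ++ g k :: g k' :: v := by
  have hk' := Fin.val_eq_val_add_one_of_covBy hk
  refine ⟨(ofFn g).take k, (ofFn g).drop (k' + 1), by simp [k.isLt.le], ?_⟩
  conv_lhs => rw [← take_append_drop k (ofFn g)]
  rw [drop_eq_getElem_cons (by simp), drop_eq_getElem_cons (by simp; omega)]
  simp only [List.getElem_ofFn, Fin.eta, hk', append_cancel_left_eq, cons.injEq, and_true,
    true_and]
  exact congrArg g (Fin.ext hk'.symm)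

theorem exists_covBy_of_ofFn_eq {u v : List α} {a b : α} (h : ofFn g = u ++ a :: b :: v) :
    ∃ k k' : Fin n, k ⋖ k' ∧ g k = a ∧ g k' = b ∧
      ofFn (g ∘ Equiv.swap k k') = u ++ b :: a :: v := by
  have hn : n = u.length + v.length + 2 := by simpa [← add_assoc] using congrArg length h
  have hg := apply_eq_getElem_of_ofFn_eq h
  have hk : (⟨u.length, by omega⟩ : Fin n) ⋖ ⟨u.length + 1, by omega⟩ :=
    Fin.covBy_iff.mpr (Nat.covBy_iff_add_one_eq.mpr rfl)
  exact ⟨_, _, hk, by simp [hg], by simp [hg], ofFn_comp_swap_of_covBy hk rfl h⟩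

end List

section WordPoset

variable {S : Type*} {comm : S → S → Prop} {w : List S} {e f : Fin w.length ≃ Fin w.length}

theorem WLe.le {i j : Fin w.length} (h : WLe comm w i j) : i ≤ j := by
  induction h with
  | single h => exact h.1
  | tail _ h ih => exact ih.trans h.1

theorem isLinExt_refl : IsLinExt comm w (Equiv.refl _) := fun _ _ h => h.le

theorem wordOf_refl : wordOf w (Equiv.refl _) = w := List.ofFn_get w

theorem wordOf_trans (e σ : Fin w.length ≃ Fin w.length) :
    wordOf w (e.trans σ) = List.ofFn ((fun i => w.get (e.symm i)) ∘ σ.symm) := rfl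

theorem wordOf_eq_wordOf_iff :
    wordOf w e = wordOf w f ↔ ∀ i, w.get (e.symm i) = w.get (f.symm i) :=
  List.ofFn_inj.trans funext_iff

theorem commMove_wordOf_trans_swap {k k' : Fin w.length} (hk : k ⋖ k')
    (hc : comm (w.get (e.symm k)) (w.get (e.symm k'))) :
    CommMove comm (wordOf w e) (wordOf w (e.trans (swap k k'))) := by
  obtain ⟨u, v, hu, h⟩ :=
    List.exists_ofFn_eq_append_cons_cons (g := fun i => w.get (e.symm i)) hk
  refine ⟨u, v, _, _, hc, h, ?_⟩
  rw [wordOf_trans, symm_swap, List.ofFn_comp_swap_of_covBy hk hu h]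

namespace IsLinExt

theorem wStep_of_covBy (he : IsLinExt comm w e) {i j : Fin w.length} (hij : WLe comm w i j)
    (hk : e i ⋖ e j) : WStep comm w i j := by
  induction hij with
  | single h => exact h
  | @tail b c hib hbc ih =>
    rcases (he _ _ (.single hbc)).eq_or_lt with hbc' | hbc'
    · exact e.injective hbc' ▸ ih (hbc' ▸ hk)
    · exact e.injective (le_antisymm (hk.le_of_lt hbc') (he _ _ hib)) ▸ hbc

theorem trans_swap (he : IsLinExt comm w e) {k k' : Fin w.length} (hk : k ⋖ k')
    (hn : ¬ WStep comm w (e.symm k) (e.symm k')) : IsLinExt comm w (e.trans (swap k k')) := by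
  refine fun i j hij => swap_apply_le_swap_apply_of_covBy hk (he i j hij) ?_
  rintro ⟨rfl, rfl⟩
  exact hn (by simpa using he.wStep_of_covBy hij hk)

theorem commClass_wordOf (he : IsLinExt comm w e) : CommClass comm w (wordOf w e) := by
  induction e using (InvImage.wf (fun e : Fin w.length ≃ Fin w.length => toLex ⇑e.symm)
    wellFounded_lt).induction with
  | _ e ih =>
    by_cases hmono : StrictMono e.symm
    · have : e = Equiv.refl _ :=
        Equiv.ext fun i => by simpa using (congrFun hmono.eq_id (e i)).symm
      rw [this, wordOf_refl]
      exact .refl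
    obtain ⟨k, k', hk, hle⟩ : ∃ k k', k ⋖ k' ∧ e.symm k' ≤ e.symm k := by
      simpa [strictMono_iff_forall_covBy] using hmono
    have hlt : e.symm k' < e.symm k := hle.lt_of_ne (e.symm.injective.ne hk.ne')
    have hf : IsLinExt comm w (e.trans (swap k k')) := he.trans_swap hk fun h => hlt.not_ge h.1
    have hc : comm (w.get (e.symm k')) (w.get (e.symm k)) := by
      by_contra hc
      exact (he _ _ (.single ⟨hlt.le, .inr hc⟩)).not_gt (by simpa using hk.lt)
    have hdesc : toLex ⇑(e.trans (swap k k')).symm < toLex ⇑e.symm :=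
      ⟨k, fun j hj => by simp [swap_apply_of_ne_of_ne hj.ne (hj.trans hk.lt).ne], by simpa⟩
    refine (ih _ hdesc hf).tail ?_
    simpa [trans_assoc] using commMove_wordOf_trans_swap (e := e.trans (swap k k')) hk (by simpa)

theorem symm_apply_le_of_forall_lt (he : IsLinExt comm w e)
    (hw : ∀ i, w.get (e.symm i) = w.get (f.symm i)) {k : Fin w.length}
    (hlt : ∀ j < k, e.symm j = f.symm j) : e.symm k ≤ f.symm k := by
  by_contra! hqp
  have hq : e (f.symm k) ≤ k := by
    simpa using he _ _ (.single ⟨hqp.le, .inl (hw k).symm⟩)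
  rcases hq.lt_or_eq with hq | hq
  · have := hlt _ hq
    simp only [symm_apply_apply] at this
    exact hq.ne (f.symm.injective this).symm
  · exact hqp.ne (e.symm_apply_eq.mpr hq.symm).symm

theorem eq_of_wordOf_eq (he : IsLinExt comm w e) (hf : IsLinExt comm w f)
    (hw : wordOf w e = wordOf w f) : e = f := by
  rw [wordOf_eq_wordOf_iff] at hw
  refine Equiv.symm_bijective.injective (Equiv.ext fun k => ?_)
  induction k using WellFoundedLT.induction with
  | _ k ih =>
    exact le_antisymm (he.symm_apply_le_of_forall_lt hw ih)
      (hf.symm_apply_le_of_forall_lt (fun i => (hw i).symm) fun j hj => (ih j hj).symm)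

end IsLinExt

theorem CommClass.exists_isLinExt {w' : List S} (h : CommClass comm w w') :
    ∃ e, IsLinExt comm w e ∧ wordOf w e = w' := by
  induction h with
  | refl => exact ⟨Equiv.refl _, isLinExt_refl, wordOf_refl⟩
  | tail _ hmove ih =>
    obtain ⟨e, he, rfl⟩ := ih
    obtain ⟨u, v, a, b, hab, hw, rfl⟩ := hmove
    by_cases hba : a = b
    · exact ⟨e, he, hba ▸ hw⟩
    obtain ⟨k, k', hk, rfl, rfl, hswap⟩ := List.exists_covBy_of_ofFn_eq hw
    exact ⟨e.trans (swap k k'), he.trans_swap hk fun h => h.2.elim hba (· hab),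
      by rw [wordOf_trans, symm_swap, hswap]⟩

end WordPoset

theorem linext_bijection_commClass_general {S : Type*} (comm : S → S → Prop) (w : List S) :
    (∀ e : Fin w.length ≃ Fin w.length, IsLinExt comm w e → CommClass comm w (wordOf w e)) ∧
    (∀ e f : Fin w.length ≃ Fin w.length, IsLinExt comm w e → IsLinExt comm w f →
      wordOf w e = wordOf w f → e = f) ∧
    (∀ w', CommClass comm w w' →
      ∃ e : Fin w.length ≃ Fin w.length, IsLinExt comm w e ∧ wordOf w e = w') :=
  ⟨fun _ he => he.commClass_wordOf, fun _ _ he hf => he.eq_of_wordOf_eq hf,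
    fun _ h => h.exists_isLinExt⟩

theorem linext_bijection_commClass {S : Type*} (comm : S → S → Prop)
    (hsym : ∀ a b, comm a b → comm b a) (hirr : ∀ a, ¬ comm a a) (w : List S) :
    (∀ e : Fin w.length ≃ Fin w.length, IsLinExt comm w e → CommClass comm w (wordOf w e)) ∧
    (∀ e f : Fin w.length ≃ Fin w.length, IsLinExt comm w e → IsLinExt comm w f →
      wordOf w e = wordOf w f → e = f) ∧
    (∀ w', CommClass comm w w' →
      ∃ e : Fin w.length ≃ Fin w.length, IsLinExt comm w e ∧ wordOf w e = w') :=
  linext_bijection_commClass_general comm w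
end

section
/- The map w(e) from linear extensions of P(w) to words is injective: if e and f are distinct linear extensions of P(w), then w(e) ≠ w(f). -/
theorem wordOf_injective {S : Type*} (comm : S → S → Prop)
    (hsym : ∀ a b, comm a b → comm b a) (hirr : ∀ a, ¬ comm a a) (w : List S)
    (e f : Fin w.length ≃ Fin w.length) (he : IsLinExt comm w e) (hf : IsLinExt comm w f)
    (hne : e ≠ f) : wordOf w e ≠ wordOf w f := by
  intro hw
  apply hne
  have hg : ∀ i, w.get (e.symm i) = w.get (f.symm i) := by
    have h := (List.ofFn_inj).mp hw
    exact fun i => congrFun h i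
  -- equal letters at ordered positions are related in the word poset
  have wle : ∀ p q : Fin w.length, p ≤ q → w.get p = w.get q → WLe comm w p q := by
    intro p q hpq hget
    exact Relation.TransGen.single ⟨hpq, Or.inl hget⟩
  have key : ∀ i : Fin w.length, e.symm i = f.symm i := by
    suffices h : ∀ n : ℕ, ∀ i : Fin w.length, i.val = n → e.symm i = f.symm i by
      exact fun i => h i.val i rfl
    intro n
    induction n using Nat.strong_induction_on with
    | _ n IH =>
      intro i hi
      set p := e.symm i with hp
      set q := f.symm i with hq
      have hget : w.get p = w.get q := hg i
      rcases lt_trichotomy p q with h | h | h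
      · exfalso
        have h1 : WLe comm w p q := wle p q h.le hget
        have h2 : f p ≤ f q := hf p q h1
        have hfq : f q = i := by rw [hq, Equiv.apply_symm_apply]
        have hne' : f p ≠ i := by
          intro hc
          have hqp : q = p := by rw [hq, ← hc, Equiv.symm_apply_apply]
          exact h.ne' hqp
        have hlt : f p < i := lt_of_le_of_ne (hfq ▸ h2) hne'
        have := IH (f p).val (hi ▸ hlt) (f p) rfl
        rw [Equiv.symm_apply_apply] at this
        have : e.symm (f p) = e.symm i := by rw [this, hp]
        exact absurd (e.symm.injective this) hne'
      · exact h
      · exfalso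
        have h1 : WLe comm w q p := wle q p h.le hget.symm
        have h2 : e q ≤ e p := he q p h1
        have hep : e p = i := by rw [hp, Equiv.apply_symm_apply]
        have hne' : e q ≠ i := by
          intro hc
          have hpq : p = q := by rw [hp, ← hc, Equiv.symm_apply_apply]
          exact h.ne' hpq
        have hlt : e q < i := lt_of_le_of_ne (hep ▸ h2) hne'
        have := IH (e q).val (hi ▸ hlt) (e q) rfl
        rw [Equiv.symm_apply_apply] at this
        have : f.symm (e q) = f.symm i := by rw [← this, hq]
        exact absurd (f.symm.injective this) hne'
  ext j
  have h := key (e j)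
  rw [Equiv.symm_apply_apply] at h
  have h2 := congrArg f h
  rw [Equiv.apply_symm_apply] at h2
  exact congrArg Fin.val h2.symm
end

section
/- For any finite word poset (P, s), there exists a word w over S such that (P, s) is isomorphic to (P(w), i ↦ w_i) as labeled posets; explicitly, if e : P → {1,...,|P|} is any linear extension and w_i = s(e^{-1}(i)), then e is an isomorphism P → P(w). -/
/-!
Every covering pair of `P` is a pair of dependent (equal or non-commuting) letters in increasing
position, so `≤` is contained in the transitive closure of such pairs. Conversely, dependent
letters sit at comparable elements of `P`, and since `e` is monotone and injective, the
comparison goes the same way as their positions.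
-/

open Relation

theorem le_iff_transGen_of_wcovBy_le_of_le_le {α : Type*} [Preorder α] [LocallyFiniteOrder α]
    {r : α → α → Prop} (hcov : (· ⩿ ·) ≤ r) (hle : r ≤ (· ≤ ·)) {x y : α} :
    x ≤ y ↔ TransGen r x y :=
  ⟨fun h ↦ TransGen.mono hcov _ _ (le_iff_transGen_wcovBy.mp h),
    fun h ↦ transGen_minimal hle _ _ h⟩

theorem Equiv.transGen_onFun_iff {α β : Type*} (g : α ≃ β) (r : β → β → Prop) {a b : α} :
    TransGen (Function.onFun r g) a b ↔ TransGen r (g a) (g b) := by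
  refine ⟨TransGen.lift g (fun _ _ h ↦ h) a b, fun h ↦ ?_⟩
  simpa [Function.onFun] using
    TransGen.lift g.symm (p := Function.onFun r g) (fun _ _ h ↦ by simpa [Function.onFun]) _ _ h

namespace WordPoset

variable {S : Type*} (comm : S → S → Prop)

def Dependent (a b : S) : Prop :=
  a = b ∨ ¬ comm a b

variable {comm}

theorem le_iff_transGen_of_linearExtension {P β : Type*} [PartialOrder P] [LocallyFiniteOrder P]
    [PartialOrder β] {s : P → S} (ha : ∀ u v, Dependent comm (s u) (s v) → u ≤ v ∨ v ≤ u)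
    (hb : ∀ u v, u ⋖ v → Dependent comm (s u) (s v)) {e : P → β} (he_mono : Monotone e)
    (he_inj : Function.Injective e) {u v : P} :
    u ≤ v ↔ TransGen (fun a b ↦ e a ≤ e b ∧ Dependent comm (s a) (s b)) u v := by
  refine le_iff_transGen_of_wcovBy_le_of_le_le (fun a b hab ↦ ?_) fun a b ⟨hle, hdep⟩ ↦ ?_
  · rcases hab.eq_or_covBy with rfl | hcov
    · exact ⟨le_rfl, Or.inl rfl⟩
    · exact ⟨he_mono hcov.le, hb a b hcov⟩
  · rcases ha a b hdep with hab | hba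
    · exact hab
    · exact (he_inj (le_antisymm hle (he_mono hba))).le

end WordPoset

open WordPoset in
theorem abstract_word_poset_is_word_poset_of_word_general {S : Type*} (comm : S → S → Prop)
    (P : Type*) [PartialOrder P] [Fintype P] (s : P → S)
    (ha : ∀ u v : P, (s u = s v ∨ ¬ comm (s u) (s v)) → u ≤ v ∨ v ≤ u)
    (hb : ∀ u v : P, u ⋖ v → (s u = s v ∨ ¬ comm (s u) (s v)))
    (e : P ≃ Fin (Fintype.card P)) (he : ∀ u v : P, u ≤ v → e u ≤ e v) :
    ∃ g : P → Fin (List.ofFn (fun i => s (e.symm i))).length,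
      Function.Bijective g ∧
      (∀ u, (List.ofFn (fun i => s (e.symm i))).get (g u) = s u) ∧
      (∀ u v, u ≤ v ↔ WLe comm (List.ofFn (fun i => s (e.symm i))) (g u) (g v)) ∧
      (∀ u, (g u : ℕ) = e u) := by
  classical
  let _ : LocallyFiniteOrder P := Fintype.toLocallyFiniteOrder
  set w := List.ofFn fun i ↦ s (e.symm i)
  let g : P ≃ Fin w.length := e.trans (finCongr List.length_ofFn.symm)
  have hget : ∀ u, w.get (g u) = s u := by simp [w, g]
  have hstep : Function.onFun (WStep comm w) g =
      fun u v ↦ e u ≤ e v ∧ Dependent comm (s u) (s v) := by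
    ext u v
    simp only [Function.onFun, WStep, Dependent, hget]
    simp [g]
  refine ⟨g, g.bijective, hget, fun u v ↦ ?_, fun u ↦ rfl⟩
  rw [WLe, ← g.transGen_onFun_iff, hstep]
  exact le_iff_transGen_of_linearExtension ha hb he e.injective

theorem abstract_word_poset_is_word_poset_of_word {S : Type*} (comm : S → S → Prop)
    (hsym : ∀ a b, comm a b → comm b a) (hirr : ∀ a, ¬ comm a a)
    (P : Type*) [PartialOrder P] [Fintype P] (s : P → S)
    (ha : ∀ u v : P, (s u = s v ∨ ¬ comm (s u) (s v)) → u ≤ v ∨ v ≤ u)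
    (hb : ∀ u v : P, u ⋖ v → (s u = s v ∨ ¬ comm (s u) (s v)))
    (e : P ≃ Fin (Fintype.card P)) (he : ∀ u v : P, u ≤ v → e u ≤ e v) :
    ∃ g : P → Fin (List.ofFn (fun i => s (e.symm i))).length,
      Function.Bijective g ∧
      (∀ u, (List.ofFn (fun i => s (e.symm i))).get (g u) = s u) ∧
      (∀ u v, u ≤ v ↔ WLe comm (List.ofFn (fun i => s (e.symm i))) (g u) (g v)) ∧
      (∀ u, (g u : ℕ) = e u) :=
  abstract_word_poset_is_word_poset_of_word_general comm P s ha hb e he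
end
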